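/- arXiv:0902.2750 — 2 statements merged into one kernel-verified Lean document; each statement's English description precedes it below -/
import Mathlib

section
/- Monotonicity inequality for the p-Laplacian vector field (Appendix A3 Lemma). Let n ≥ 1 and 1 < p ≤ 2, and set c_p = min{1, 2(p−1)}. Then for all vectors a, b ∈ ℝⁿ one has ⟨a − b, |a|^{p−2} a − |b|^{p−2} b⟩ ≥ c_p · |a − b|² / ( |a|^{2−p} + |b|^{2−p} ), where |x|^{p−2} x is interpreted as the zero vector when x = 0, and where for a = b = 0 the right-hand side is interpreted as 0. -/
open MeasureTheory Filter Set
open scoped Topology RealInnerProductSpace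

noncomputable section

abbrev Euc (n : ℕ) := EuclideanSpace ℝ (Fin n)

/-- The spatial gradient of `u (x, t)` with respect to `x`. -/
def sGrad {n : ℕ} (u : Euc n → ℝ → ℝ) (x : Euc n) (t : ℝ) : Euc n :=
  gradient (fun y => u y t) x

/-- The divergence of a vector field on Euclidean space. -/
def vdiv {n : ℕ} (F : Euc n → Euc n) (x : Euc n) : ℝ :=
  ∑ i, fderiv ℝ F x (EuclideanSpace.single i 1) i

/-- The Laplacian of a scalar function. -/
def lap {n : ℕ} (φ : Euc n → ℝ) (x : Euc n) : ℝ :=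
  vdiv (fun y => gradient φ y) x

/-- The `p`-Laplacian flux `|v|^(p-2) • v`; by the `rpow` conventions it vanishes at `v = 0`
when `p ≠ 2` (and also when `p = 2`, trivially). -/
def pFlux {n : ℕ} (p : ℝ) (v : Euc n) : Euc n := (‖v‖ ^ (p - 2)) • v

/-- `θ_r = 1 / (r p + (p - 2) n)`. -/
def thetaR (n : ℕ) (p r : ℝ) : ℝ := 1 / (r * p + (p - 2) * n)

/-- A classical solution of the fast `p`-Laplacian equation `∂ₜ u = div (|∇u|^(p-2) ∇u)`
on the set `Q ⊆ ℝⁿ × ℝ`: `u`, `∇u`, `∂ₜ u` exist and are continuous on `Q`, the flux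
vector field is (spatially) differentiable, and the equation holds pointwise on `Q`. -/
structure IsPLapSol {n : ℕ} (p : ℝ) (u : Euc n → ℝ → ℝ) (Q : Set (Euc n × ℝ)) : Prop where
  contU : ContinuousOn (fun q : Euc n × ℝ => u q.1 q.2) Q
  contGrad : ContinuousOn (fun q : Euc n × ℝ => sGrad u q.1 q.2) Q
  contDt : ContinuousOn (fun q : Euc n × ℝ => deriv (u q.1) q.2) Q
  diffSpace : ∀ q ∈ Q, DifferentiableAt ℝ (fun y => u y q.2) q.1
  diffTime : ∀ q ∈ Q, DifferentiableAt ℝ (u q.1) q.2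
  diffFlux : ∀ q ∈ Q, DifferentiableAt ℝ (fun y => pFlux p (sGrad u y q.2)) q.1
  eqn : ∀ q ∈ Q, deriv (u q.1) q.2 = vdiv (fun y => pFlux p (sGrad u y q.2)) q.1

/-- `u` takes the initial datum `u₀` in `L^r` on `B` as `t → 0⁺`. -/
def TakesInit {n : ℕ} (r : ℝ) (u : Euc n → ℝ → ℝ) (u₀ : Euc n → ℝ) (B : Set (Euc n)) : Prop :=
  Tendsto (fun t => ∫ x in B, |u x t - u₀ x| ^ r) (𝓝[>] (0:ℝ)) (𝓝 0)

/-!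
Expanding the inner product, both sides are affine in `s = ⟪a, b⟫` and the right-hand side
decreases faster in `s`, so by Cauchy–Schwarz it suffices to take `s = ‖a‖ ‖b‖`. This is the
one-dimensional inequality `c (A - B)² ≤ (A - B) (A^(p-1) - B^(p-1)) (A^(2-p) + B^(2-p))`.
Writing `A = e^(m+d)`, `B = e^(m-d)`, it becomes
`sinh d · sinh ((3 - 2p) d) ≤ max 0 (3 - 2p) · sinh² d`, a consequence of the convexity of
`sinh` on `[0, ∞)`.
-/

namespace Real

theorem convexOn_sinh_Ici : ConvexOn ℝ (Ici 0) sinh := by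
  refine MonotoneOn.convexOn_of_deriv (convex_Ici 0) continuous_sinh.continuousOn
    differentiable_sinh.differentiableOn ?_
  rw [deriv_sinh, interior_Ici]
  exact cosh_strictMonoOn.monotoneOn.mono Ioi_subset_Ici_self

theorem sinh_mul_le_mul_sinh {q d : ℝ} (hq0 : 0 ≤ q) (hq1 : q ≤ 1) (hd : 0 ≤ d) :
    sinh (q * d) ≤ q * sinh d := by
  simpa using convexOn_sinh_Ici.2 (mem_Ici.2 hd) (mem_Ici.2 le_rfl) hq0 (sub_nonneg.2 hq1)
    (add_sub_cancel q 1)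

theorem sinh_mul_sinh_mul_le {q : ℝ} (hq : q ≤ 1) (d : ℝ) :
    sinh d * sinh (q * d) ≤ max 0 q * sinh d ^ 2 := by
  wlog hd : 0 ≤ d generalizing d
  · simpa [mul_neg] using this (-d) (by linarith)
  have hsd : 0 ≤ sinh d := sinh_nonneg_iff.2 hd
  rcases le_total q 0 with hq0 | hq0
  · have : sinh (q * d) ≤ 0 := sinh_nonpos_iff.2 (mul_nonpos_of_nonpos_of_nonneg hq0 hd)
    nlinarith [le_max_left 0 q, sq_nonneg (sinh d)]
  · rw [max_eq_right hq0, sq, ← mul_assoc, mul_comm (sinh d)]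
    exact mul_le_mul_of_nonneg_right (sinh_mul_le_mul_sinh hq0 hq hd) hsd

theorem exp_add_sub_exp_sub (m x : ℝ) : exp (m + x) - exp (m - x) = 2 * exp m * sinh x := by
  rw [sinh_eq, exp_add, exp_sub, exp_neg, div_eq_mul_inv]
  ring

end Real

open Real in
theorem sub_mul_rpow_mul_rpow_sub_le {A B p : ℝ} (hA : 0 < A) (hB : 0 < B) (hp : 1 ≤ p) :
    (A - B) * (A ^ (2 - p) * B ^ (p - 1) - A ^ (p - 1) * B ^ (2 - p))
      ≤ max 0 (3 - 2 * p) * (A - B) ^ 2 := by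
  obtain ⟨m, d, rfl, rfl⟩ : ∃ m d, A = exp (m + d) ∧ B = exp (m - d) :=
    ⟨(log A + log B) / 2, (log A - log B) / 2, by ring_nf; rw [exp_log hA],
      by ring_nf; rw [exp_log hB]⟩
  simp only [← exp_mul, ← exp_add]
  rw [show (m + d) * (2 - p) + (m - d) * (p - 1) = m + (3 - 2 * p) * d by ring,
    show (m + d) * (p - 1) + (m - d) * (2 - p) = m - (3 - 2 * p) * d by ring,
    exp_add_sub_exp_sub, exp_add_sub_exp_sub]
  calc 2 * exp m * sinh d * (2 * exp m * sinh ((3 - 2 * p) * d))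
      = (2 * exp m) ^ 2 * (sinh d * sinh ((3 - 2 * p) * d)) := by ring
    _ ≤ (2 * exp m) ^ 2 * (max 0 (3 - 2 * p) * sinh d ^ 2) :=
      mul_le_mul_of_nonneg_left (sinh_mul_sinh_mul_le (by linarith) d) (sq_nonneg _)
    _ = _ := by ring

theorem pLaplacian_monotonicity_real {A B p : ℝ} (hA : 0 < A) (hB : 0 < B) (hp : 1 ≤ p) :
    min 1 (2 * (p - 1)) * (A - B) ^ 2 / (A ^ (2 - p) + B ^ (2 - p))
      ≤ (A - B) * (A ^ (p - 1) - B ^ (p - 1)) := by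
  have hrpow {X : ℝ} (hX : 0 < X) : X ^ (p - 1) * X ^ (2 - p) = X := by
    rw [← Real.rpow_add hX]; norm_num
  rw [div_le_iff₀ (by positivity)]
  have hmax := sub_mul_rpow_mul_rpow_sub_le hA hB hp
  have hc : max 0 (3 - 2 * p) = 1 - min 1 (2 * (p - 1)) := by
    rw [← max_sub_sub_left]; congr 1 <;> ring
  rw [hc] at hmax
  calc min 1 (2 * (p - 1)) * (A - B) ^ 2
      ≤ (A - B) ^ 2 - (A - B) * (A ^ (2 - p) * B ^ (p - 1) - A ^ (p - 1) * B ^ (2 - p)) := by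
        linarith
    _ = _ := by
      linear_combination (A - B) * (hrpow hB - hrpow hA)

theorem pLaplacian_monotonicity_of_le_mul {A B p s : ℝ} (hA : 0 < A) (hB : 0 < B) (hp : 1 ≤ p)
    (hs : s ≤ A * B) :
    min 1 (2 * (p - 1)) * (A ^ 2 - 2 * s + B ^ 2) / (A ^ (2 - p) + B ^ (2 - p))
      ≤ A ^ (p - 2) * A ^ 2 + B ^ (p - 2) * B ^ 2 - s * (A ^ (p - 2) + B ^ (p - 2)) := by
  set c := min 1 (2 * (p - 1))
  have hinv {X : ℝ} (hX : 0 < X) : X ^ (p - 2) = (X ^ (2 - p))⁻¹ := by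
    rw [← Real.rpow_neg hX.le, neg_sub]
  have hsucc {X : ℝ} (hX : 0 < X) : X ^ (p - 1) = X ^ (p - 2) * X := by
    rw [← Real.rpow_add_one hX.ne']; ring_nf
  have hslope : 2 * c / (A ^ (2 - p) + B ^ (2 - p)) ≤ A ^ (p - 2) + B ^ (p - 2) := by
    have hu : 0 < A ^ (2 - p) := by positivity
    have hv : 0 < B ^ (2 - p) := by positivity
    rw [hinv hA, hinv hB, div_le_iff₀ (by positivity)]
    field_simp
    nlinarith [sq_nonneg (A ^ (2 - p) - B ^ (2 - p)),
      mul_le_mul_of_nonneg_right (min_le_left 1 (2 * (p - 1))) (mul_pos hu hv).le]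
  calc c * (A ^ 2 - 2 * s + B ^ 2) / (A ^ (2 - p) + B ^ (2 - p))
      = c * (A - B) ^ 2 / (A ^ (2 - p) + B ^ (2 - p))
          + (A * B - s) * (2 * c / (A ^ (2 - p) + B ^ (2 - p))) := by ring
    _ ≤ (A - B) * (A ^ (p - 1) - B ^ (p - 1)) + (A * B - s) * (A ^ (p - 2) + B ^ (p - 2)) :=
      add_le_add (pLaplacian_monotonicity_real hA hB hp)
        (mul_le_mul_of_nonneg_left hslope (sub_nonneg.2 hs))
    _ = _ := by rw [hsucc hA, hsucc hB]; ring

theorem mul_sq_div_add_rpow_le {B E c : ℝ} (p : ℝ) (hB : 0 ≤ B) (hE : 0 ≤ E) (hc : c ≤ 1) :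
    c * B ^ 2 / (E + B ^ (2 - p)) ≤ B ^ (p - 2) * B ^ 2 := by
  rcases hB.eq_or_lt with rfl | hB
  · simp
  have hBp : 0 < B ^ (2 - p) := by positivity
  calc c * B ^ 2 / (E + B ^ (2 - p)) ≤ B ^ 2 / B ^ (2 - p) := by
        gcongr
        · exact mul_le_of_le_one_left (sq_nonneg B) hc
        · linarith
    _ = B ^ (p - 2) * B ^ 2 := by
        rw [div_eq_inv_mul, ← Real.rpow_neg hB.le, neg_sub]

theorem inner_sub_smul_sub_smul {E : Type*} [NormedAddCommGroup E] [InnerProductSpace ℝ E]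
    (a b : E) (α β : ℝ) :
    ⟪a - b, α • a - β • b⟫ = α * ‖a‖ ^ 2 + β * ‖b‖ ^ 2 - ⟪a, b⟫ * (α + β) := by
  rw [inner_sub_right, real_inner_smul_right, real_inner_smul_right, inner_sub_left,
    inner_sub_left, real_inner_self_eq_norm_sq, real_inner_self_eq_norm_sq, real_inner_comm b a]
  ring

theorem pLaplacian_monotonicity_general
    (n : ℕ) (p : ℝ) (hp1 : 1 < p)
    (a b : Euc n) :
    min 1 (2 * (p - 1)) * ‖a - b‖ ^ 2 / (‖a‖ ^ (2 - p) + ‖b‖ ^ (2 - p))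
      ≤ ⟪a - b, (‖a‖ ^ (p - 2)) • a - (‖b‖ ^ (p - 2)) • b⟫ := by
  have hc : min 1 (2 * (p - 1)) ≤ 1 := min_le_left _ _
  rcases eq_or_ne a 0 with rfl | ha
  · simpa [real_inner_smul_right, real_inner_self_eq_norm_sq] using
      mul_sq_div_add_rpow_le p (norm_nonneg b) (Real.rpow_nonneg le_rfl (2 - p)) hc
  rcases eq_or_ne b 0 with rfl | hb
  · simpa [real_inner_smul_right, real_inner_self_eq_norm_sq, add_comm] using
      mul_sq_div_add_rpow_le p (norm_nonneg a) (Real.rpow_nonneg le_rfl (2 - p)) hc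
  rw [inner_sub_smul_sub_smul, norm_sub_sq_real]
  exact pLaplacian_monotonicity_of_le_mul (norm_pos_iff.2 ha) (norm_pos_iff.2 hb) hp1.le
    (real_inner_le_norm a b)

/-- Appendix A3: monotonicity inequality for the `p`-Laplacian vector field. -/
theorem pLaplacian_monotonicity
    (n : ℕ) (hn : 1 ≤ n) (p : ℝ) (hp1 : 1 < p) (hp2 : p ≤ 2)
    (a b : Euc n) :
    min 1 (2 * (p - 1)) * ‖a - b‖ ^ 2 / (‖a‖ ^ (2 - p) + ‖b‖ ^ (2 - p))
      ≤ ⟪a - b, (‖a‖ ^ (p - 2)) • a - (‖b‖ ^ (p - 2)) • b⟫ :=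
  pLaplacian_monotonicity_general n p hp1 a b
end
end

section
/- Existence of cutoff functions with controlled gradient and Laplacian integrals (Appendix A1, Lemma choice.varphi). For every dimension n ≥ 1 and all reals α > 0 and β > 0 there exist constants C₁ > 0 (depending only on n and α) and C₂ > 0 (depending only on n and β) such that: for every x₀ ∈ ℝⁿ and all radii 0 < R < R₀ there exists a smooth, compactly supported function φ : ℝⁿ → ℝ with 0 ≤ φ ≤ 1, φ ≡ 1 on the closed ball cl(B_R(x₀)), φ ≡ 0 outside B_{R₀}(x₀), satisfying both ∫_{ℝⁿ} |∇φ(x)|^α φ(x)^{1−α} dx ≤ C₁ |B_{R₀}∖B_R| (R₀−R)^{−α} and ∫_{ℝⁿ} |Δφ(x)|^β φ(x)^{1−β} dx ≤ C₂ |B_{R₀}∖B_R| (R₀−R)^{−2β}, where the integrands are interpreted as 0 at points where φ = 0. -/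
open MeasureTheory Filter Set
open scoped Topology RealInnerProductSpace

noncomputable section

/-
Take `φ x = η ((R₀² - ‖x - x₀‖²) / (R₀² - R²)) ^ m`, where `η` is the smooth transition
from `0` on `(-∞, 0]` to `1` on `[1, ∞)`; composing with the squared norm keeps `φ` smooth at `x₀`.
Since `(R₀ - R) R₀ ≤ R₀² - R²`, the radial formulas for the gradient and the Laplacian give
`|∇φ| ≲ (R₀ - R)⁻¹ η ^ (m - 1)` and `|Δφ| ≲ (R₀ - R)⁻² η ^ (m - 2)` on `B_{R₀}`, hence
`|∇φ| ^ α φ ^ (1 - α) ≲ (R₀ - R) ^ (-α) η ^ (m - α)` and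
`|Δφ| ^ β φ ^ (1 - β) ≲ (R₀ - R) ^ (-2β) η ^ (m - 2β)`, where the powers of `η` are at most `1`
once `m ≥ max α (2β)`. Both integrands vanish off the annulus (`φ = 0` outside `B_{R₀}` and `φ` is
locally constant on `B_R`), so each integral is at most its pointwise bound times the volume of
the annulus.
-/

open Real Metric
open scoped ENNReal

lemma Real.smoothTransition.iteratedDeriv_eq_zero {k : ℕ} (hk : k ≠ 0) {s : ℝ}
    (hs : s ∉ Icc (0 : ℝ) 1) : iteratedDeriv k smoothTransition s = 0 := by
  obtain ⟨c, hc⟩ : ∃ c : ℝ, smoothTransition =ᶠ[𝓝 s] fun _ => c := by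
    rcases not_and_or.mp hs with hs | hs
    · exact ⟨0, eventually_of_mem (Iio_mem_nhds (not_le.mp hs)) fun t ht =>
        smoothTransition.zero_of_nonpos (le_of_lt ht)⟩
    · exact ⟨1, eventually_of_mem (Ioi_mem_nhds (not_le.mp hs)) fun t ht =>
        smoothTransition.one_of_one_le (le_of_lt ht)⟩
  rw [(hc.iteratedDeriv k).eq_of_nhds, iteratedDeriv_const, if_neg hk]

lemma Real.smoothTransition.exists_abs_iteratedDeriv_le {k : ℕ} (hk : k ≠ 0) :
    ∃ M, 0 < M ∧ ∀ s, |iteratedDeriv k smoothTransition s| ≤ M := by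
  have hsupp : HasCompactSupport (iteratedDeriv k smoothTransition) :=
    HasCompactSupport.intro isCompact_Icc fun s hs => iteratedDeriv_eq_zero hk hs
  obtain ⟨C, hC⟩ := (smoothTransition.contDiff (n := k).continuous_iteratedDeriv k le_rfl)
    |>.bounded_above_of_compact_support hsupp
  exact ⟨max C 1, by positivity, fun s => (hC s).trans (le_max_left _ _)⟩

lemma deriv_comp_const_sub_div {f : ℝ → ℝ} (hf : Differentiable ℝ f) (c w : ℝ) :
    deriv (fun t => f ((c - t) / w)) = fun t => -deriv f ((c - t) / w) / w := by
  funext t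
  have : HasDerivAt (fun t => f ((c - t) / w)) (deriv f ((c - t) / w) * (-1 / w)) t :=
    (hf _).hasDerivAt.comp t (((hasDerivAt_id t).const_sub c).div_const w)
  rw [this.deriv]
  ring

lemma abs_deriv_pow_le {h : ℝ → ℝ} {t A : ℝ} (hd : DifferentiableAt ℝ h t) (h0 : 0 ≤ h t)
    (hA : |deriv h t| ≤ A) (m : ℕ) :
    |deriv (fun s => h s ^ m) t| ≤ m * A * h t ^ (m - 1) := by
  rw [deriv_fun_pow hd, abs_mul, abs_mul, Nat.abs_cast, abs_of_nonneg (pow_nonneg h0 _)]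
  have := mul_le_mul_of_nonneg_left hA (by positivity : 0 ≤ (m : ℝ) * h t ^ (m - 1))
  linarith

lemma abs_deriv_deriv_pow_le {h : ℝ → ℝ} {t A B : ℝ} (hh : ContDiff ℝ 2 h) (h0 : 0 ≤ h t)
    (h1 : h t ≤ 1) (hA : |deriv h t| ≤ A) (hB : |deriv (deriv h) t| ≤ B) (m : ℕ) :
    |deriv (deriv fun s => h s ^ m) t| ≤ (m ^ 2 * A ^ 2 + m * B) * h t ^ (m - 2) := by
  have hd : Differentiable ℝ h := hh.differentiable two_ne_zero
  have hderiv : deriv (fun s => h s ^ m) = fun s => m * h s ^ (m - 1) * deriv h s :=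
    funext fun s => deriv_fun_pow (hd s) m
  have hsecond : HasDerivAt (fun s => m * h s ^ (m - 1) * deriv h s)
      (m * ((m - 1 : ℕ) * h t ^ (m - 1 - 1) * deriv h t) * deriv h t
        + m * h t ^ (m - 1) * deriv (deriv h) t) t :=
    (((hd t).hasDerivAt.fun_pow (m - 1)).const_mul (m : ℝ)).mul
      (hh.differentiable_deriv_two t).hasDerivAt
  rw [hderiv, hsecond.deriv, show m - 1 - 1 = m - 2 by omega]
  have hpow : h t ^ (m - 1) ≤ h t ^ (m - 2) := pow_le_pow_of_le_one h0 h1 (by omega)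
  have hm : ((m - 1 : ℕ) : ℝ) ≤ m := by exact_mod_cast Nat.sub_le m 1
  have hsq : deriv h t ^ 2 ≤ A ^ 2 := sq_le_sq' (abs_le.mp hA).1 (abs_le.mp hA).2
  have hA0 : 0 ≤ A := (abs_nonneg _).trans hA
  have hp : 0 ≤ h t ^ (m - 2) := pow_nonneg h0 _
  have hq : 0 ≤ h t ^ (m - 1) := pow_nonneg h0 _
  calc _ ≤ |m * ((m - 1 : ℕ) * h t ^ (m - 2) * deriv h t) * deriv h t|
        + |m * h t ^ (m - 1) * deriv (deriv h) t| := abs_add_le _ _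
    _ = m * (m - 1 : ℕ) * h t ^ (m - 2) * deriv h t ^ 2
        + m * h t ^ (m - 1) * |deriv (deriv h) t| := by
      simp only [abs_mul, Nat.abs_cast, abs_of_nonneg hp, abs_of_nonneg hq, ← sq_abs (deriv h t)]
      ring
    _ ≤ m * m * h t ^ (m - 2) * A ^ 2 + m * h t ^ (m - 2) * B := by gcongr
    _ = (m ^ 2 * A ^ 2 + m * B) * h t ^ (m - 2) := by ring

section Radial

variable {E : Type*} [NormedAddCommGroup E] [InnerProductSpace ℝ E]

lemma hasFDerivAt_norm_sub_sq (x₀ x : E) :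
    HasFDerivAt (fun y => ‖y - x₀‖ ^ 2) ((2 : ℝ) • innerSL ℝ (x - x₀)) x :=
  ((hasFDerivAt_id x).sub_const x₀).norm_sq.congr_fderiv (by ext; simp)

lemma hasGradientAt_comp_norm_sub_sq [CompleteSpace E] {G : ℝ → ℝ} {x₀ x : E}
    (hG : DifferentiableAt ℝ G (‖x - x₀‖ ^ 2)) :
    HasGradientAt (fun y => G (‖y - x₀‖ ^ 2)) ((2 * deriv G (‖x - x₀‖ ^ 2)) • (x - x₀)) x := by
  rw [hasGradientAt_iff_hasFDerivAt]
  refine (hG.hasDerivAt.comp_hasFDerivAt x (hasFDerivAt_norm_sub_sq x₀ x)).congr_fderiv ?_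
  ext y
  simp
  ring

lemma gradient_eq_zero_of_eventuallyEq_const [CompleteSpace E] {f : E → ℝ} {x : E} {c : ℝ}
    (h : f =ᶠ[𝓝 x] fun _ => c) : gradient f x = 0 := by
  rw [h.gradient_eq, gradient_fun_const]

end Radial

section Divergence

variable {n : ℕ}

lemma vdiv_smul_sub {s : Euc n → ℝ} {s' : Euc n →L[ℝ] ℝ} {x₀ x : Euc n}
    (hs : HasFDerivAt s s' x) :
    vdiv (fun y => s y • (y - x₀)) x = n * s x + s' (x - x₀) := by
  have hF : HasFDerivAt (fun y => s y • (y - x₀))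
      (s x • ContinuousLinearMap.id ℝ (Euc n) + s'.smulRight (x - x₀)) x :=
    hs.smul ((hasFDerivAt_id x).sub_const x₀)
  have hsum : ∑ i, s' (EuclideanSpace.single i 1) * (x - x₀) i = s' (x - x₀) := by
    conv_rhs => rw [← (EuclideanSpace.basisFun (Fin n) ℝ).sum_repr (x - x₀)]
    simp [mul_comm]
  rw [vdiv, hF.fderiv, ← hsum]
  simp [Finset.sum_add_distrib]

lemma lap_comp_norm_sub_sq {G : ℝ → ℝ} (hG : ContDiff ℝ 2 G) (x₀ x : Euc n) :
    lap (fun y => G (‖y - x₀‖ ^ 2)) x = 2 * n * deriv G (‖x - x₀‖ ^ 2)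
      + 4 * ‖x - x₀‖ ^ 2 * deriv (deriv G) (‖x - x₀‖ ^ 2) := by
  have hgrad : gradient (fun y => G (‖y - x₀‖ ^ 2))
      = fun y => (2 * deriv G (‖y - x₀‖ ^ 2)) • (y - x₀) :=
    funext fun y => (hasGradientAt_comp_norm_sub_sq (hG.differentiable two_ne_zero _)).gradient
  have hs : HasFDerivAt (fun y => 2 * deriv G (‖y - x₀‖ ^ 2))
      ((2 * deriv (deriv G) (‖x - x₀‖ ^ 2)) • (2 : ℝ) • innerSL ℝ (x - x₀)) x :=
    ((hG.differentiable_deriv_two _).hasDerivAt.const_mul 2).comp_hasFDerivAt x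
      (hasFDerivAt_norm_sub_sq x₀ x)
  rw [lap, hgrad, vdiv_smul_sub hs]
  simp only [FunLike.coe_smul, Pi.smul_apply, innerSL_apply_apply, real_inner_self_eq_norm_sq,
    smul_eq_mul]
  ring

lemma lap_eq_zero_of_eventuallyEq_const {φ : Euc n → ℝ} {x : Euc n} {c : ℝ}
    (h : φ =ᶠ[𝓝 x] fun _ => c) : lap φ x = 0 := by
  have hgrad : gradient φ =ᶠ[𝓝 x] fun _ => 0 :=
    h.eventually_nhds.mono fun y hy => gradient_eq_zero_of_eventuallyEq_const hy
  simp [lap, vdiv, hgrad.fderiv_eq]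

end Divergence

lemma rpow_mul_pow_rpow_one_sub_le {τ c v γ : ℝ} {m k : ℕ} (hτ : 0 < τ) (hτ1 : τ ≤ 1)
    (hγ : 0 < γ) (hk : k ≤ m) (hkγ : k * γ ≤ m) (hv : 0 ≤ v) (hvc : v ≤ c * τ ^ (m - k)) :
    v ^ γ * (τ ^ m) ^ (1 - γ) ≤ c ^ γ := by
  have hc : 0 ≤ c := nonneg_of_mul_nonneg_left (hv.trans hvc) (pow_pos hτ _)
  calc v ^ γ * (τ ^ m) ^ (1 - γ) ≤ (c * τ ^ (m - k)) ^ γ * (τ ^ m) ^ (1 - γ) := by gcongr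
    _ = c ^ γ * τ ^ (m - k * γ) := by
      rw [mul_rpow hc (by positivity), ← rpow_natCast, ← rpow_natCast, ← rpow_mul hτ.le,
        ← rpow_mul hτ.le, mul_assoc, ← rpow_add hτ, Nat.cast_sub hk]
      ring_nf
    _ ≤ c ^ γ := mul_le_of_le_one_right (by positivity) (rpow_le_one hτ.le hτ1 (by linarith))

lemma integral_ite_rpow_mul_rpow_le {X : Type*} [MeasurableSpace X] {μ : Measure X}
    {φ v : X → ℝ} {A : Set X} {γ c : ℝ} (hγ : 0 < γ) (hA : μ A < ∞) (hφ0 : ∀ x, 0 ≤ φ x)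
    (hv0 : ∀ x, 0 ≤ v x) (hc : 0 ≤ c) (hoff : ∀ x ∉ A, φ x = 0 ∨ v x = 0)
    (hbound : ∀ x, φ x ≠ 0 → v x ^ γ * φ x ^ (1 - γ) ≤ c) :
    ∫ x, (if φ x = 0 then 0 else v x ^ γ * φ x ^ (1 - γ)) ∂μ ≤ c * μ.real A := by
  have hoff' : ∀ x ∉ A, (if φ x = 0 then 0 else v x ^ γ * φ x ^ (1 - γ)) = 0 := fun x hx => by
    rcases hoff x hx with h | h <;> simp [h, zero_rpow hγ.ne']
  rw [← setIntegral_eq_integral_of_forall_compl_eq_zero hoff']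
  refine (le_norm_self _).trans (norm_setIntegral_le_of_norm_le_const hA fun x _ => ?_)
  split_ifs with h
  · simpa using hc
  · rw [Real.norm_of_nonneg (mul_nonneg (rpow_nonneg (hv0 x) _) (rpow_nonneg (hφ0 x) _))]
    exact hbound x h

def cutoffProfile (R R₀ t : ℝ) : ℝ := smoothTransition ((R₀ ^ 2 - t) / (R₀ ^ 2 - R ^ 2))

def radialCutoff {E : Type*} [NormedAddCommGroup E] (m : ℕ) (x₀ : E) (R R₀ : ℝ) (x : E) : ℝ :=
  cutoffProfile R R₀ (‖x - x₀‖ ^ 2) ^ m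

section CutoffProfile

variable {R R₀ : ℝ}

lemma deriv_cutoffProfile : deriv (cutoffProfile R R₀) = fun t =>
    -deriv smoothTransition ((R₀ ^ 2 - t) / (R₀ ^ 2 - R ^ 2)) / (R₀ ^ 2 - R ^ 2) :=
  deriv_comp_const_sub_div (smoothTransition.contDiff (n := 1).differentiable one_ne_zero) _ _

lemma deriv_deriv_cutoffProfile : deriv (deriv (cutoffProfile R R₀)) = fun t =>
    deriv (deriv smoothTransition) ((R₀ ^ 2 - t) / (R₀ ^ 2 - R ^ 2)) / (R₀ ^ 2 - R ^ 2) ^ 2 := by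
  rw [deriv_cutoffProfile, deriv_comp_const_sub_div (f := fun s => -deriv smoothTransition s / _)
    ((smoothTransition.contDiff (n := 2)).differentiable_deriv_two.neg.div_const _)]
  funext t
  simp only [deriv_div_const, deriv.fun_neg]
  generalize R₀ ^ 2 - R ^ 2 = w
  ring

lemma contDiff_cutoffProfile {k : ℕ∞} : ContDiff ℝ k (cutoffProfile R R₀) :=
  smoothTransition.contDiff.comp ((contDiff_const.sub contDiff_id).div_const _)

lemma cutoffProfile_nonneg (t : ℝ) : 0 ≤ cutoffProfile R R₀ t := smoothTransition.nonneg _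

lemma cutoffProfile_le_one (t : ℝ) : cutoffProfile R R₀ t ≤ 1 := smoothTransition.le_one _

lemma cutoffProfile_eq_one (hRR₀ : R ^ 2 < R₀ ^ 2) {t : ℝ} (ht : t ≤ R ^ 2) :
    cutoffProfile R R₀ t = 1 :=
  smoothTransition.one_of_one_le <| (one_le_div (by linarith)).mpr (by linarith)

lemma cutoffProfile_eq_zero (hRR₀ : R ^ 2 < R₀ ^ 2) {t : ℝ} (ht : R₀ ^ 2 ≤ t) :
    cutoffProfile R R₀ t = 0 :=
  smoothTransition.zero_of_nonpos <| div_nonpos_of_nonpos_of_nonneg (by linarith) (by linarith)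

lemma abs_deriv_cutoffProfile_le {M : ℝ} (hM : ∀ s, |deriv smoothTransition s| ≤ M)
    (hRR₀ : R ^ 2 < R₀ ^ 2) (t : ℝ) :
    |deriv (cutoffProfile R R₀) t| ≤ M * (R₀ ^ 2 - R ^ 2)⁻¹ := by
  rw [deriv_cutoffProfile, abs_div, abs_neg, abs_of_pos (show 0 < R₀ ^ 2 - R ^ 2 by linarith),
    div_eq_mul_inv]
  gcongr
  exact hM _

lemma abs_deriv_deriv_cutoffProfile_le {M : ℝ} (hM : ∀ s, |deriv (deriv smoothTransition) s| ≤ M)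
    (t : ℝ) : |deriv (deriv (cutoffProfile R R₀)) t| ≤ M * ((R₀ ^ 2 - R ^ 2)⁻¹) ^ 2 := by
  rw [deriv_deriv_cutoffProfile, abs_div, abs_of_nonneg (sq_nonneg (R₀ ^ 2 - R ^ 2)),
    div_eq_mul_inv, inv_pow]
  gcongr
  exact hM _

end CutoffProfile

lemma mul_inv_sq_sub_sq_le {R R₀ : ℝ} (hR : 0 ≤ R) (hRR₀ : R < R₀) :
    R₀ * (R₀ ^ 2 - R ^ 2)⁻¹ ≤ (R₀ - R)⁻¹ := by
  rw [← div_eq_mul_inv, ← one_div, div_le_div_iff₀ (by nlinarith) (by linarith)]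
  nlinarith

lemma inv_sq_sub_sq_le {R R₀ : ℝ} (hR : 0 ≤ R) (hRR₀ : R < R₀) :
    (R₀ ^ 2 - R ^ 2)⁻¹ ≤ (R₀ - R)⁻¹ ^ 2 := by
  rw [inv_pow]
  exact inv_anti₀ (by positivity) (by nlinarith)

section RadialCutoff

variable {E : Type*} [NormedAddCommGroup E] {m : ℕ} {x₀ : E} {R R₀ : ℝ}

lemma contDiff_radialCutoff [InnerProductSpace ℝ E] {k : ℕ∞} :
    ContDiff ℝ k (radialCutoff m x₀ R R₀) :=
  (contDiff_cutoffProfile.comp ((contDiff_id.sub contDiff_const).norm_sq ℝ)).pow m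

lemma radialCutoff_nonneg (x : E) : 0 ≤ radialCutoff m x₀ R R₀ x :=
  pow_nonneg (cutoffProfile_nonneg _) _

lemma radialCutoff_le_one (x : E) : radialCutoff m x₀ R R₀ x ≤ 1 :=
  pow_le_one₀ (cutoffProfile_nonneg _) (cutoffProfile_le_one _)

lemma radialCutoff_eq_one (hR : 0 ≤ R) (hRR₀ : R < R₀) {x : E} (hx : x ∈ closedBall x₀ R) :
    radialCutoff m x₀ R R₀ x = 1 := by
  rw [radialCutoff, cutoffProfile_eq_one (by nlinarith)
    (pow_le_pow_left₀ (norm_nonneg _) (mem_closedBall_iff_norm.mp hx) 2), one_pow]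

lemma radialCutoff_eq_zero (hm : m ≠ 0) (hR : 0 ≤ R) (hRR₀ : R < R₀) {x : E}
    (hx : x ∉ ball x₀ R₀) : radialCutoff m x₀ R R₀ x = 0 := by
  rw [mem_ball_iff_norm, not_lt] at hx
  rw [radialCutoff, cutoffProfile_eq_zero (by nlinarith) (pow_le_pow_left₀ (by linarith) hx 2),
    zero_pow hm]

lemma hasCompactSupport_radialCutoff [ProperSpace E] (hm : m ≠ 0) (hR : 0 ≤ R) (hRR₀ : R < R₀) :
    HasCompactSupport (radialCutoff m x₀ R R₀) :=
  HasCompactSupport.intro (isCompact_closedBall x₀ R₀) fun _ hx =>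
    radialCutoff_eq_zero hm hR hRR₀ fun hb => hx (ball_subset_closedBall hb)

lemma radialCutoff_eq_zero_or_eventuallyEq_one (hm : m ≠ 0) (hR : 0 ≤ R) (hRR₀ : R < R₀) {x : E}
    (hx : x ∉ ball x₀ R₀ \ ball x₀ R) :
    radialCutoff m x₀ R R₀ x = 0 ∨ radialCutoff m x₀ R R₀ =ᶠ[𝓝 x] fun _ => 1 := by
  by_cases hxR : x ∈ ball x₀ R
  · exact .inr <| eventually_of_mem (isOpen_ball.mem_nhds hxR) fun y hy =>
      radialCutoff_eq_one hR hRR₀ (ball_subset_closedBall hy)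
  · exact .inl <| radialCutoff_eq_zero hm hR hRR₀ fun hx₀ => hx ⟨hx₀, hxR⟩

lemma cutoffProfile_pos_of_radialCutoff_ne_zero (hm : m ≠ 0) {x : E}
    (hx : radialCutoff m x₀ R R₀ x ≠ 0) : 0 < cutoffProfile R R₀ (‖x - x₀‖ ^ 2) :=
  (cutoffProfile_nonneg _).lt_of_ne' (ne_zero_pow hm hx)

lemma norm_sub_le_of_radialCutoff_ne_zero (hm : m ≠ 0) (hR : 0 ≤ R) (hRR₀ : R < R₀) {x : E}
    (hx : radialCutoff m x₀ R R₀ x ≠ 0) : ‖x - x₀‖ ≤ R₀ := by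
  by_contra h
  exact hx (radialCutoff_eq_zero hm hR hRR₀ fun hb => h (mem_ball_iff_norm.mp hb).le)

variable [InnerProductSpace ℝ E] [CompleteSpace E]

lemma gradient_radialCutoff (x : E) : gradient (radialCutoff m x₀ R R₀) x
    = (2 * deriv (fun t => cutoffProfile R R₀ t ^ m) (‖x - x₀‖ ^ 2)) • (x - x₀) :=
  (hasGradientAt_comp_norm_sub_sq
    ((contDiff_cutoffProfile.pow m).differentiable one_ne_zero _)).gradient

lemma norm_gradient_radialCutoff_le {M : ℝ} (hM : ∀ s, |deriv smoothTransition s| ≤ M)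
    (hR : 0 ≤ R) (hRR₀ : R < R₀) {x : E} (hx : ‖x - x₀‖ ≤ R₀) :
    ‖gradient (radialCutoff m x₀ R R₀) x‖
      ≤ 2 * m * M * (R₀ - R)⁻¹ * cutoffProfile R R₀ (‖x - x₀‖ ^ 2) ^ (m - 1) := by
  have hM0 : 0 ≤ M := (abs_nonneg _).trans (hM 0)
  have hW : R ^ 2 < R₀ ^ 2 := by nlinarith
  have hτ := cutoffProfile_nonneg (R := R) (R₀ := R₀) (‖x - x₀‖ ^ 2)
  have hG := abs_deriv_pow_le (contDiff_cutoffProfile (k := 1).differentiable one_ne_zero _) hτ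
    (abs_deriv_cutoffProfile_le hM hW (‖x - x₀‖ ^ 2)) m
  rw [gradient_radialCutoff]
  calc _ = 2 * |deriv (fun t => cutoffProfile R R₀ t ^ m) (‖x - x₀‖ ^ 2)| * ‖x - x₀‖ := by
        rw [norm_smul, Real.norm_eq_abs, abs_mul, abs_two]
    _ ≤ 2 * (m * (M * (R₀ ^ 2 - R ^ 2)⁻¹) * cutoffProfile R R₀ (‖x - x₀‖ ^ 2) ^ (m - 1)) * R₀ := by
        gcongr
    _ = 2 * m * M * (R₀ * (R₀ ^ 2 - R ^ 2)⁻¹) * cutoffProfile R R₀ (‖x - x₀‖ ^ 2) ^ (m - 1) := by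
        ring
    _ ≤ _ := by grw [mul_inv_sq_sub_sq_le hR hRR₀]

lemma norm_gradient_rpow_mul_radialCutoff_rpow_le {α M : ℝ} (hα : 0 < α) (hαm : α ≤ m)
    (hM : ∀ s, |deriv smoothTransition s| ≤ M) (hR : 0 ≤ R) (hRR₀ : R < R₀) {x : E}
    (hx : radialCutoff m x₀ R R₀ x ≠ 0) :
    ‖gradient (radialCutoff m x₀ R R₀) x‖ ^ α * radialCutoff m x₀ R R₀ x ^ (1 - α)
      ≤ (2 * m * M) ^ α * (R₀ - R) ^ (-α) := by
  have hm : m ≠ 0 := by rintro rfl; norm_num at hαm; linarith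
  have hd : 0 < R₀ - R := by linarith
  have hM0 : 0 ≤ M := (abs_nonneg _).trans (hM 0)
  rw [rpow_neg hd.le, ← inv_rpow hd.le, ← mul_rpow (by positivity) (by positivity)]
  exact rpow_mul_pow_rpow_one_sub_le (k := 1) (cutoffProfile_pos_of_radialCutoff_ne_zero hm hx)
    (cutoffProfile_le_one _) hα (by omega) (by simpa using hαm) (norm_nonneg _)
    (norm_gradient_radialCutoff_le hM hR hRR₀ (norm_sub_le_of_radialCutoff_ne_zero hm hR hRR₀ hx))

end RadialCutoff

section Laplacian

variable {n m : ℕ} {x₀ : Euc n} {R R₀ : ℝ}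

lemma lap_radialCutoff (x : Euc n) : lap (radialCutoff m x₀ R R₀) x
    = 2 * n * deriv (fun t => cutoffProfile R R₀ t ^ m) (‖x - x₀‖ ^ 2)
      + 4 * ‖x - x₀‖ ^ 2 * deriv (deriv fun t => cutoffProfile R R₀ t ^ m) (‖x - x₀‖ ^ 2) :=
  lap_comp_norm_sub_sq (contDiff_cutoffProfile.pow m) x₀ x

lemma abs_lap_radialCutoff_le {M₁ M₂ : ℝ} (hM₁ : ∀ s, |deriv smoothTransition s| ≤ M₁)
    (hM₂ : ∀ s, |deriv (deriv smoothTransition) s| ≤ M₂) (hR : 0 ≤ R) (hRR₀ : R < R₀)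
    {x : Euc n} (hx : ‖x - x₀‖ ≤ R₀) :
    |lap (radialCutoff m x₀ R R₀) x| ≤ (2 * n * m * M₁ + 4 * (m ^ 2 * M₁ ^ 2 + m * M₂))
      * (R₀ - R)⁻¹ ^ 2 * cutoffProfile R R₀ (‖x - x₀‖ ^ 2) ^ (m - 2) := by
  set u := ‖x - x₀‖ ^ 2
  set τ := cutoffProfile R R₀ u
  have hM₁0 : 0 ≤ M₁ := (abs_nonneg _).trans (hM₁ 0)
  have hM₂0 : 0 ≤ M₂ := (abs_nonneg _).trans (hM₂ 0)
  have hW : R ^ 2 < R₀ ^ 2 := by nlinarith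
  have hW0 : 0 ≤ (R₀ ^ 2 - R ^ 2)⁻¹ := inv_nonneg.mpr (by linarith)
  have hR₀ : 0 ≤ R₀ := by linarith
  have hτ : 0 ≤ τ := cutoffProfile_nonneg u
  have hτ1 : τ ≤ 1 := cutoffProfile_le_one u
  have hu : u ≤ R₀ ^ 2 := pow_le_pow_left₀ (norm_nonneg _) hx 2
  have hG' := abs_deriv_pow_le (contDiff_cutoffProfile (k := 1).differentiable one_ne_zero u) hτ
    (abs_deriv_cutoffProfile_le hM₁ hW u) m
  have hG'' := abs_deriv_deriv_pow_le contDiff_cutoffProfile hτ hτ1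
    (abs_deriv_cutoffProfile_le hM₁ hW u) (abs_deriv_deriv_cutoffProfile_le hM₂ u) m
  have hpow : τ ^ (m - 1) ≤ τ ^ (m - 2) := pow_le_pow_of_le_one hτ hτ1 (by omega)
  rw [lap_radialCutoff]
  calc _ ≤ 2 * n * |deriv (fun t => cutoffProfile R R₀ t ^ m) u|
        + 4 * u * |deriv (deriv fun t => cutoffProfile R R₀ t ^ m) u| := by
        refine (abs_add_le _ _).trans_eq ?_
        simp [abs_mul, u]
    _ ≤ 2 * n * (m * (M₁ * (R₀ ^ 2 - R ^ 2)⁻¹) * τ ^ (m - 2))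
        + 4 * R₀ ^ 2 * ((m ^ 2 * (M₁ * (R₀ ^ 2 - R ^ 2)⁻¹) ^ 2
          + m * (M₂ * (R₀ ^ 2 - R ^ 2)⁻¹ ^ 2)) * τ ^ (m - 2)) := by
        grw [hG', hG'', hpow, hu]
    _ = 2 * n * m * M₁ * (R₀ ^ 2 - R ^ 2)⁻¹ * τ ^ (m - 2)
        + 4 * (m ^ 2 * M₁ ^ 2 + m * M₂) * (R₀ * (R₀ ^ 2 - R ^ 2)⁻¹) ^ 2 * τ ^ (m - 2) := by
        ring
    _ ≤ _ := by
        grw [mul_inv_sq_sub_sq_le hR hRR₀, inv_sq_sub_sq_le hR hRR₀]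
        exact le_of_eq (by ring)

lemma abs_lap_rpow_mul_radialCutoff_rpow_le {β M₁ M₂ : ℝ} (hβ : 0 < β) (hm : 2 ≤ m)
    (hβm : 2 * β ≤ m) (hM₁ : ∀ s, |deriv smoothTransition s| ≤ M₁)
    (hM₂ : ∀ s, |deriv (deriv smoothTransition) s| ≤ M₂) (hR : 0 ≤ R) (hRR₀ : R < R₀)
    {x : Euc n} (hx : radialCutoff m x₀ R R₀ x ≠ 0) :
    |lap (radialCutoff m x₀ R R₀) x| ^ β * radialCutoff m x₀ R R₀ x ^ (1 - β)
      ≤ (2 * n * m * M₁ + 4 * (m ^ 2 * M₁ ^ 2 + m * M₂)) ^ β * (R₀ - R) ^ (-(2 * β)) := by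
  have hd : 0 < R₀ - R := by linarith
  have hM₁0 : 0 ≤ M₁ := (abs_nonneg _).trans (hM₁ 0)
  have hM₂0 : 0 ≤ M₂ := (abs_nonneg _).trans (hM₂ 0)
  rw [rpow_neg hd.le, rpow_mul hd.le, rpow_two, ← inv_rpow (by positivity),
    ← mul_rpow (by positivity) (by positivity), ← inv_pow]
  exact rpow_mul_pow_rpow_one_sub_le (k := 2)
    (cutoffProfile_pos_of_radialCutoff_ne_zero (by omega) hx) (cutoffProfile_le_one _) hβ hm
    (by simpa [mul_comm] using hβm) (abs_nonneg _) (abs_lap_radialCutoff_le hM₁ hM₂ hR hRR₀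
      (norm_sub_le_of_radialCutoff_ne_zero (by omega) hR hRR₀ hx))

end Laplacian

theorem cutoff_existence_general
    (n : ℕ) (α β : ℝ) (hα : 0 < α) (hβ : 0 < β) :
    ∃ C₁ C₂ : ℝ, 0 < C₁ ∧ 0 < C₂ ∧
      ∀ (x₀ : Euc n) (R R₀ : ℝ), 0 < R → R < R₀ →
      ∃ φ : Euc n → ℝ,
        ContDiff ℝ (⊤ : ℕ∞) φ ∧ HasCompactSupport φ ∧
        (∀ x, 0 ≤ φ x) ∧ (∀ x, φ x ≤ 1) ∧
        (∀ x ∈ Metric.closedBall x₀ R, φ x = 1) ∧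
        (∀ x ∉ Metric.ball x₀ R₀, φ x = 0) ∧
        (∫ x : Euc n, (if φ x = 0 then 0 else ‖gradient φ x‖ ^ α * φ x ^ (1 - α)))
          ≤ C₁ * (volume (Metric.ball x₀ R₀ \ Metric.ball x₀ R)).toReal
              * (R₀ - R) ^ (-α) ∧
        (∫ x : Euc n, (if φ x = 0 then 0 else |lap φ x| ^ β * φ x ^ (1 - β)))
          ≤ C₂ * (volume (Metric.ball x₀ R₀ \ Metric.ball x₀ R)).toReal
              * (R₀ - R) ^ (-(2 * β)) := by
  obtain ⟨M₁, hM₁0, hM₁⟩ := smoothTransition.exists_abs_iteratedDeriv_le one_ne_zero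
  obtain ⟨M₂, hM₂0, hM₂⟩ := smoothTransition.exists_abs_iteratedDeriv_le two_ne_zero
  rw [iteratedDeriv_one] at hM₁
  rw [iteratedDeriv_succ, iteratedDeriv_one] at hM₂
  set m := ⌈α⌉₊ + ⌈2 * β⌉₊ + 2
  have hαm : α ≤ m := (Nat.le_ceil α).trans (by exact_mod_cast (by omega : ⌈α⌉₊ ≤ m))
  have hβm : 2 * β ≤ m := (Nat.le_ceil _).trans (by exact_mod_cast (by omega : ⌈2 * β⌉₊ ≤ m))
  refine ⟨(2 * m * M₁) ^ α, (2 * n * m * M₁ + 4 * (m ^ 2 * M₁ ^ 2 + m * M₂)) ^ β,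
    by positivity, by positivity, fun x₀ R R₀ hR hRR₀ => ?_⟩
  have hm : m ≠ 0 := by omega
  have hA : volume (ball x₀ R₀ \ ball x₀ R) < ∞ :=
    (measure_mono sdiff_subset).trans_lt measure_ball_lt_top
  have hoff := fun x (hx : x ∉ ball x₀ R₀ \ ball x₀ R) =>
    radialCutoff_eq_zero_or_eventuallyEq_one hm hR.le hRR₀ hx
  refine ⟨radialCutoff m x₀ R R₀, contDiff_radialCutoff,
    hasCompactSupport_radialCutoff hm hR.le hRR₀, radialCutoff_nonneg, radialCutoff_le_one,
    fun _ => radialCutoff_eq_one hR.le hRR₀, fun _ => radialCutoff_eq_zero hm hR.le hRR₀, ?_, ?_⟩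
  · rw [mul_right_comm, ← measureReal_def]
    exact integral_ite_rpow_mul_rpow_le hα hA radialCutoff_nonneg (fun _ => norm_nonneg _)
      (by positivity) (fun x hx => (hoff x hx).imp_right fun h => by
        rw [gradient_eq_zero_of_eventuallyEq_const h, norm_zero])
      fun _ => norm_gradient_rpow_mul_radialCutoff_rpow_le hα hαm hM₁ hR.le hRR₀
  · rw [mul_right_comm, ← measureReal_def]
    exact integral_ite_rpow_mul_rpow_le hβ hA radialCutoff_nonneg (fun _ => abs_nonneg _)
      (by positivity) (fun x hx => (hoff x hx).imp_right fun h => by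
        rw [lap_eq_zero_of_eventuallyEq_const h, abs_zero])
      fun _ => abs_lap_rpow_mul_radialCutoff_rpow_le hβ (by omega) hβm hM₁ hM₂ hR.le hRR₀

/-- Appendix A1 (choice.varphi): existence of cutoff functions with controlled gradient
and Laplacian integrals. -/
theorem cutoff_existence
    (n : ℕ) (hn : 1 ≤ n) (α β : ℝ) (hα : 0 < α) (hβ : 0 < β) :
    ∃ C₁ C₂ : ℝ, 0 < C₁ ∧ 0 < C₂ ∧
      ∀ (x₀ : Euc n) (R R₀ : ℝ), 0 < R → R < R₀ →
      ∃ φ : Euc n → ℝ,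
        ContDiff ℝ (⊤ : ℕ∞) φ ∧ HasCompactSupport φ ∧
        (∀ x, 0 ≤ φ x) ∧ (∀ x, φ x ≤ 1) ∧
        (∀ x ∈ Metric.closedBall x₀ R, φ x = 1) ∧
        (∀ x ∉ Metric.ball x₀ R₀, φ x = 0) ∧
        (∫ x : Euc n, (if φ x = 0 then 0 else ‖gradient φ x‖ ^ α * φ x ^ (1 - α)))
          ≤ C₁ * (volume (Metric.ball x₀ R₀ \ Metric.ball x₀ R)).toReal
              * (R₀ - R) ^ (-α) ∧
        (∫ x : Euc n, (if φ x = 0 then 0 else |lap φ x| ^ β * φ x ^ (1 - β)))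
          ≤ C₂ * (volume (Metric.ball x₀ R₀ \ Metric.ball x₀ R)).toReal
              * (R₀ - R) ^ (-(2 * β)) :=
  cutoff_existence_general n α β hα hβ
end
end
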